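/- Every nonempty clopen subset U of the Cantor space has a least element w with respect to the lexicographic order, and this least element is eventually false: there exists N such that w n = false for all n ≥ N. -/
import Mathlib


/-- Lexicographic (strict) order on the Cantor space `ℕ → Bool`. -/
def lexLt (w w' : ℕ → Bool) : Prop :=
  ∃ n : ℕ, (∀ k < n, w k = w' k) ∧ w n = false ∧ w' n = true

open Classical in
/-- Greedy decreasing sequence of subsets of `U`. -/
noncomputable def seqSet (U : Set (ℕ → Bool)) : ℕ → Set (ℕ → Bool)
  | 0 => U
  | n + 1 =>
    if ∃ v ∈ seqSet U n, v n = false then {v ∈ seqSet U n | v n = false}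
    else {v ∈ seqSet U n | v n = true}

open Classical in
/-- The candidate least element. -/
noncomputable def wseq (U : Set (ℕ → Bool)) (n : ℕ) : Bool :=
  if ∃ v ∈ seqSet U n, v n = false then false else true

lemma seqSet_succ (U : Set (ℕ → Bool)) (n : ℕ) :
    seqSet U (n + 1) = {v ∈ seqSet U n | v n = wseq U n} := by
  classical
  by_cases h : ∃ v ∈ seqSet U n, v n = false <;>
    simp [seqSet, wseq, h]

lemma seqSet_nonempty (U : Set (ℕ → Bool)) (hne : U.Nonempty) (n : ℕ) :
    (seqSet U n).Nonempty := by
  classical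
  induction n with
  | zero => exact hne
  | succ n ih =>
    rw [seqSet_succ]
    by_cases h : ∃ v ∈ seqSet U n, v n = false
    · obtain ⟨v, hv, hvn⟩ := h
      exact ⟨v, hv, by simp [wseq, hvn]; exact ⟨v, hv, hvn⟩⟩
    · obtain ⟨v, hv⟩ := ih
      refine ⟨v, hv, ?_⟩
      have : v n = true := by
        cases hvn : v n
        · exact absurd ⟨v, hv, hvn⟩ h
        · rfl
      simp [wseq, h, this]

lemma seqSet_subset (U : Set (ℕ → Bool)) (n : ℕ) : seqSet U n ⊆ U := by
  induction n with
  | zero => exact le_rfl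
  | succ n ih => rw [seqSet_succ]; exact fun v hv => ih hv.1

lemma mem_seqSet_agree (U : Set (ℕ → Bool)) {v : ℕ → Bool} {n : ℕ}
    (hv : v ∈ seqSet U n) : ∀ k < n, v k = wseq U k := by
  induction n with
  | zero => intro k hk; omega
  | succ n ih =>
    rw [seqSet_succ] at hv
    intro k hk
    rcases Nat.lt_succ_iff_lt_or_eq.mp hk with h | rfl
    · exact ih hv.1 k h
    · exact hv.2

lemma agree_mem_seqSet (U : Set (ℕ → Bool)) {v : ℕ → Bool} (hv : v ∈ U) (n : ℕ)
    (h : ∀ k < n, v k = wseq U k) : v ∈ seqSet U n := by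
  induction n with
  | zero => exact hv
  | succ n ih =>
    rw [seqSet_succ]
    exact ⟨ih fun k hk => h k (Nat.lt_succ_of_lt hk), h n (Nat.lt_succ_self n)⟩

lemma wseq_mem (U : Set (ℕ → Bool)) (hU : IsClosed U) (hne : U.Nonempty) :
    wseq U ∈ U := by
  classical
  choose f hf using seqSet_nonempty U hne
  have hagree : ∀ n, ∀ k < n, f n k = wseq U k := fun n => mem_seqSet_agree U (hf n)
  have htend : Filter.Tendsto f Filter.atTop (nhds (wseq U)) := by
    rw [tendsto_pi_nhds]
    intro k
    apply tendsto_nhds_of_eventually_eq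
    filter_upwards [Filter.eventually_ge_atTop (k + 1)] with n hn
    exact hagree n k hn
  exact hU.mem_of_tendsto htend (Filter.Eventually.of_forall fun n => seqSet_subset U n (hf n))

/-- Every nonempty clopen subset of the Cantor space has a lexicographic least element,
which is eventually `false`. -/
theorem clopen_has_least_element (U : Set (ℕ → Bool)) (hU : IsClopen U) (hne : U.Nonempty) :
    ∃ w ∈ U, (∀ v ∈ U, w = v ∨ lexLt w v) ∧ ∃ N : ℕ, ∀ n ≥ N, w n = false := by
  classical
  set w := wseq U with hw
  have hwU : w ∈ U := wseq_mem U hU.isClosed hne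
  have hmin : ∀ v ∈ U, w = v ∨ lexLt w v := by
    intro v hv
    by_cases hwv : w = v
    · exact Or.inl hwv
    · right
      have hex : ∃ n, w n ≠ v n := by
        by_contra h
        push_neg at h
        exact hwv (funext h)
      have hfind := Nat.find_spec hex
      set n := Nat.find hex with hndef
      have hagree : ∀ k < n, w k = v k := fun k hk => by
        have := Nat.find_min hex hk
        simpa using this
      have hvS : v ∈ seqSet U n :=
        agree_mem_seqSet U hv n fun k hk => (hagree k hk).symm
      have hvtrue : v n = true := by
        cases hvn : v n
        · have : wseq U n = false := by
            simp [wseq]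
            exact ⟨v, hvS, hvn⟩
          exact absurd (this.trans hvn.symm) hfind
        · rfl
      have hwfalse : w n = false := by
        cases hwn : w n
        · rfl
        · exact absurd (hwn.trans hvtrue.symm) hfind
      exact ⟨n, hagree, hwfalse, hvtrue⟩
  refine ⟨w, hwU, hmin, ?_⟩
  obtain ⟨I, u, hIu, hsub⟩ := isOpen_pi_iff.mp hU.isOpen w hwU
  set N := (I.sup id) + 1 with hN
  refine ⟨N, fun n hn => ?_⟩
  set v : ℕ → Bool := fun k => if k < N then w k else false with hvdef
  have hvU : v ∈ U := by
    apply hsub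
    intro i hi
    have : i < N := Nat.lt_succ_of_le (Finset.le_sup (f := id) hi)
    simp only [hvdef, if_pos this]
    exact (hIu i hi).2
  rcases hmin v hvU with heq | ⟨m, _, hm1, hm2⟩
  · have : w n = v n := congrFun heq n
    rw [this, hvdef]
    simp [Nat.not_lt.mpr hn]
  · by_cases hmN : m < N
    · simp only [hvdef, if_pos hmN] at hm2
      rw [hm2] at hm1; exact absurd hm1 (by simp)
    · simp only [hvdef, if_neg hmN] at hm2
      exact absurd hm2 (by simp)
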